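/- Let ψ̃_n⁰, ψ̃_n : ℤ×𝕋 → ℝ be smooth in the second variable with ψ̃_n⁰(j,·) and ψ̃_n(j,·) vanishing for large |j|, and suppose that ψ̃_n(j,e^{iξ}) = ψ_n(e^{iξ}) + (j−n)φ_n(e^{iξ}) for |j−n| ≤ n/3 with ψ_n, φ_n ∈ C^∞(𝕋) real-valued and sup_{n≥n₀} ‖φ_n‖_{C¹(𝕋)} ≤ 1/2. Let θ_n⁰, θ_n ∈ C_0^∞(ℝ) be real-valued and vanish outside [2n/3, 4n/3]. Define η_n(ξ) := ξ − φ_n(e^{iξ}) (a bijection ℝ → ℝ for n ≥ n₀) with inverse ξ_n, ϑ̃_n(j,e^{iη}) := (j, e^{iξ_n(η)}), and 𝔭_n(e^{iη}) := ∂_η ξ_n(η) (a well-defined smooth function on 𝕋). Then for n ≥ n₀, with Q_n⁰ := (θ_n⁰ e^{iψ̃_n⁰})(Λ,S) and Q_n := (θ_n e^{iψ̃_n})(Λ,S), one has Q_n⁰ Q_n^* = ( θ_n⁰ e^{i(ψ̃_n⁰ − ψ̃_n)∘ϑ̃_n} )(Λ,S) · 𝔭_n(S) · θ_n(Λ). 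-/

import Mathlib

open scoped Real

noncomputable section

/-- The Hilbert space `ℓ²(ℤ)`. -/
abbrev l2Z : Type := lp (fun _ : ℤ => ℂ) 2

/-- The canonical orthonormal basis vector `e_j` of `ℓ²(ℤ)`. -/
def eZ (j : ℤ) : l2Z := lp.single 2 j (1 : ℂ)

open MeasureTheory Complex AddCircle

instance : Fact (0 < 2 * Real.pi) := ⟨Real.two_pi_pos⟩


lemma coord_eq_inner (x : l2Z) (m : ℤ) : x m = (inner ℂ (eZ m) x : ℂ) := by
  rw [eZ, lp.inner_single_left]; simp

lemma adj_coord (A : l2Z →L[ℂ] l2Z) (m r : ℤ) :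
    (ContinuousLinearMap.adjoint A (eZ m)) r
      = (starRingEnd ℂ) (inner ℂ (eZ m) (A (eZ r)) : ℂ) := by
  rw [coord_eq_inner, ← inner_conj_symm, ContinuousLinearMap.adjoint_inner_left]

lemma ext_of_matrix (A B : l2Z →L[ℂ] l2Z)
    (h : ∀ j k : ℤ, (inner ℂ (eZ j) (A (eZ k)) : ℂ) = inner ℂ (eZ j) (B (eZ k))) : A = B := by
  have hadj : ∀ m : ℤ, ContinuousLinearMap.adjoint A (eZ m)
      = ContinuousLinearMap.adjoint B (eZ m) := by
    intro m
    apply lp.ext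
    funext r
    show (ContinuousLinearMap.adjoint A (eZ m)) r = (ContinuousLinearMap.adjoint B (eZ m)) r
    rw [adj_coord, adj_coord, h]
  ext x m
  show (A x) m = (B x) m
  rw [coord_eq_inner, coord_eq_inner, ← ContinuousLinearMap.adjoint_inner_left,
    ← ContinuousLinearMap.adjoint_inner_left, hadj]



def cF (f : ℝ → ℂ) (m : ℤ) : ℂ := fourierCoeff (AddCircle.liftIco (2 * Real.pi) 0 f) m

lemma cF_eq (f : ℝ → ℂ) (m : ℤ) :
    cF f m = (∫ ξ in (0:ℝ)..(2 * Real.pi),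
      Complex.exp (-(Complex.I * m * ξ)) * f ξ) / (2 * Real.pi) := by
  rw [cF, fourierCoeff_liftIco_eq, fourierCoeffOn_eq_integral]
  simp only [zero_add, sub_zero, smul_eq_mul, fourier_coe_apply]
  have hπ : (Real.pi : ℂ) ≠ 0 := by simpa using Real.pi_ne_zero
  have hint : (∫ x in (0:ℝ)..(2*Real.pi),
        Complex.exp (2 * (Real.pi:ℂ) * Complex.I * ((-m : ℤ) : ℂ) * (x:ℂ) / ((2 * Real.pi : ℝ):ℂ)) * f x)
      = ∫ ξ in (0:ℝ)..(2*Real.pi), Complex.exp (-(Complex.I * m * ξ)) * f ξ := by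
    refine intervalIntegral.integral_congr fun ξ _ => ?_
    congr 1
    congr 1
    push_cast
    field_simp
  rw [hint, real_smul]
  push_cast
  field_simp

lemma liftIco_mul (f g : ℝ → ℂ) :
    (fun t => (starRingEnd ℂ) (AddCircle.liftIco (2 * Real.pi) 0 f t)
      * AddCircle.liftIco (2 * Real.pi) 0 g t)
    = AddCircle.liftIco (2 * Real.pi) 0 (fun ξ => (starRingEnd ℂ) (f ξ) * g ξ) := by
  funext t
  rfl

lemma parseval_core (f g : ℝ → ℂ) (hf : Continuous f) (hg : Continuous g)
    (hpf : Function.Periodic f (2 * Real.pi)) (hpg : Function.Periodic g (2 * Real.pi)) :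
    ∑' m : ℤ, (starRingEnd ℂ) (cF f m) * cF g m
      = (∫ ξ in (0:ℝ)..(2 * Real.pi), (starRingEnd ℂ) (f ξ) * g ξ) / (2 * Real.pi) := by
  have hendf : f 0 = f (0 + 2 * Real.pi) := by simpa using (hpf 0).symm
  have hendg : g 0 = g (0 + 2 * Real.pi) := by simpa using (hpg 0).symm
  set FC : C(AddCircle (2 * Real.pi), ℂ) :=
    ⟨AddCircle.liftIco (2 * Real.pi) 0 f, AddCircle.liftIco_continuous hendf hf.continuousOn⟩
    with hFC
  set GC : C(AddCircle (2 * Real.pi), ℂ) :=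
    ⟨AddCircle.liftIco (2 * Real.pi) 0 g, AddCircle.liftIco_continuous hendg hg.continuousOn⟩
    with hGC
  set Flp := ContinuousMap.toLp (E := ℂ) 2 haarAddCircle ℂ FC with hFlp
  set Glp := ContinuousMap.toLp (E := ℂ) 2 haarAddCircle ℂ GC with hGlp
  have hreprF : ∀ m : ℤ, fourierBasis.repr Flp m = cF f m := by
    intro m
    rw [fourierBasis_repr, hFlp, fourierCoeff_toLp]
    rfl
  have hreprG : ∀ m : ℤ, fourierBasis.repr Glp m = cF g m := by
    intro m
    rw [fourierBasis_repr, hGlp, fourierCoeff_toLp]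
    rfl
  have step1 : ∑' m : ℤ, (starRingEnd ℂ) (cF f m) * cF g m = (inner ℂ Flp Glp : ℂ) := by
    rw [← fourierBasis.repr.inner_map_map Flp Glp, lp.inner_eq_tsum]
    congr 1
    funext m
    rw [RCLike.inner_apply, hreprF, hreprG, mul_comm]
  have step2 : (inner ℂ Flp Glp : ℂ)
      = ∫ t, (starRingEnd ℂ) (FC t) * GC t ∂(haarAddCircle) := by
    rw [MeasureTheory.L2.inner_def]
    apply integral_congr_ae
    filter_upwards [ContinuousMap.coeFn_toLp (p := 2) (μ := haarAddCircle) (𝕜 := ℂ) FC,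
      ContinuousMap.coeFn_toLp (p := 2) (μ := haarAddCircle) (𝕜 := ℂ) GC] with t h1 h2
    rw [RCLike.inner_apply, h1, h2, mul_comm]
  have step3 : (∫ t, (starRingEnd ℂ) (FC t) * GC t ∂(haarAddCircle))
      = cF (fun ξ => (starRingEnd ℂ) (f ξ) * g ξ) 0 := by
    have : (fun t => (starRingEnd ℂ) (FC t) * GC t)
        = AddCircle.liftIco (2 * Real.pi) 0 (fun ξ => (starRingEnd ℂ) (f ξ) * g ξ) :=
      liftIco_mul f g
    rw [cF, fourierCoeff]
    simp only [neg_zero, fourier_zero, one_smul, ← this]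
  rw [step1, step2, step3, cF_eq]
  congr 1
  refine intervalIntegral.integral_congr fun ξ _ => ?_
  simp

lemma intervalIntegral_conj (f : ℝ → ℂ) (a b : ℝ) :
    (∫ x in a..b, (starRingEnd ℂ) (f x)) = (starRingEnd ℂ) (∫ x in a..b, f x) := by
  rw [intervalIntegral, intervalIntegral, integral_conj, integral_conj, map_sub]

lemma cF_conj (f : ℝ → ℂ) (m : ℤ) :
    cF (fun x => (starRingEnd ℂ) (f x)) m = (starRingEnd ℂ) (cF f (-m)) := by
  rw [cF_eq, cF_eq, map_div₀, ← intervalIntegral_conj]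
  congr 1
  · refine intervalIntegral.integral_congr fun ξ _ => ?_
    rw [map_mul, ← Complex.exp_conj]
    congr 1
    simp only [map_neg, map_mul, Complex.conj_I, Complex.conj_ofReal, map_intCast]
    push_cast
    ring
  · simp [Complex.ext_iff]

lemma parseval2 (f g : ℝ → ℂ) (hf : Continuous f) (hg : Continuous g)
    (hpf : Function.Periodic f (2 * Real.pi)) (hpg : Function.Periodic g (2 * Real.pi)) :
    ∑' m : ℤ, cF f m * (starRingEnd ℂ) (cF g m)
      = (∫ ξ in (0:ℝ)..(2 * Real.pi), f ξ * (starRingEnd ℂ) (g ξ)) / (2 * Real.pi) := by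
  have h := parseval_core g f hg hf hpg hpf
  calc ∑' m : ℤ, cF f m * (starRingEnd ℂ) (cF g m)
      = ∑' m : ℤ, (starRingEnd ℂ) (cF g m) * cF f m := by
        congr 1; funext m; ring
    _ = (∫ ξ in (0:ℝ)..(2 * Real.pi), (starRingEnd ℂ) (g ξ) * f ξ) / (2 * Real.pi) := h
    _ = (∫ ξ in (0:ℝ)..(2 * Real.pi), f ξ * (starRingEnd ℂ) (g ξ)) / (2 * Real.pi) := by
        congr 1; refine intervalIntegral.integral_congr fun ξ _ => ?_; ring


section Subst

variable {Φ ξfn : ℝ → ℝ}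

lemma gmap_hasDeriv (hΦ : ContDiff ℝ (⊤ : ℕ∞) Φ) (x : ℝ) :
    HasDerivAt (fun ξ => ξ - Φ ξ) (1 - deriv Φ x) x :=
  (hasDerivAt_id x).sub ((hΦ.differentiable (by simp) x).hasDerivAt)

lemma one_sub_pos (hsmall : ∀ ξ : ℝ, |deriv Φ ξ| ≤ 1/2) (x : ℝ) : 0 < 1 - deriv Φ x := by
  have := (abs_le.1 (hsmall x)).2
  linarith

lemma gmap_strictMono (hΦ : ContDiff ℝ (⊤ : ℕ∞) Φ) (hsmall : ∀ ξ : ℝ, |deriv Φ ξ| ≤ 1/2) :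
    StrictMono (fun ξ => ξ - Φ ξ) := by
  apply strictMono_of_deriv_pos
  intro x
  rw [(gmap_hasDeriv hΦ x).deriv]
  exact one_sub_pos hsmall x

lemma xif_strictMono (hΦ : ContDiff ℝ (⊤ : ℕ∞) Φ) (hsmall : ∀ ξ : ℝ, |deriv Φ ξ| ≤ 1/2)
    (hinv1 : ∀ η, ξfn η - Φ (ξfn η) = η) : StrictMono ξfn := by
  intro a b hab
  have h := gmap_strictMono hΦ hsmall
  rw [← h.lt_iff_lt]
  simpa only [hinv1] using hab

lemma xif_continuous (hΦ : ContDiff ℝ (⊤ : ℕ∞) Φ) (hsmall : ∀ ξ : ℝ, |deriv Φ ξ| ≤ 1/2)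
    (hinv1 : ∀ η, ξfn η - Φ (ξfn η) = η) (hinv2 : ∀ ξ, ξfn (ξ - Φ ξ) = ξ) :
    Continuous ξfn :=
  (xif_strictMono hΦ hsmall hinv1).monotone.continuous_of_surjective
    (fun ξ => ⟨ξ - Φ ξ, hinv2 ξ⟩)

lemma xif_hasDeriv (hΦ : ContDiff ℝ (⊤ : ℕ∞) Φ) (hsmall : ∀ ξ : ℝ, |deriv Φ ξ| ≤ 1/2)
    (hinv1 : ∀ η, ξfn η - Φ (ξfn η) = η) (hinv2 : ∀ ξ, ξfn (ξ - Φ ξ) = ξ) (η : ℝ) :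
    HasDerivAt ξfn (1 - deriv Φ (ξfn η))⁻¹ η := by
  refine HasDerivAt.of_local_left_inverse
    ((xif_continuous hΦ hsmall hinv1 hinv2).continuousAt)
    (gmap_hasDeriv hΦ (ξfn η)) (ne_of_gt (one_sub_pos hsmall _))
    (Filter.Eventually.of_forall fun y => hinv1 y)

lemma xif_deriv (hΦ : ContDiff ℝ (⊤ : ℕ∞) Φ) (hsmall : ∀ ξ : ℝ, |deriv Φ ξ| ≤ 1/2)
    (hinv1 : ∀ η, ξfn η - Φ (ξfn η) = η) (hinv2 : ∀ ξ, ξfn (ξ - Φ ξ) = ξ) (η : ℝ) :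
    deriv ξfn η = (1 - deriv Φ (ξfn η))⁻¹ :=
  (xif_hasDeriv hΦ hsmall hinv1 hinv2 η).deriv

lemma xif_deriv_continuous (hΦ : ContDiff ℝ (⊤ : ℕ∞) Φ) (hsmall : ∀ ξ : ℝ, |deriv Φ ξ| ≤ 1/2)
    (hinv1 : ∀ η, ξfn η - Φ (ξfn η) = η) (hinv2 : ∀ ξ, ξfn (ξ - Φ ξ) = ξ) :
    Continuous (deriv ξfn) := by
  have : deriv ξfn = fun η => (1 - deriv Φ (ξfn η))⁻¹ :=
    funext (xif_deriv hΦ hsmall hinv1 hinv2)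
  rw [this]
  exact (continuous_const.sub ((hΦ.continuous_deriv (by simp)).comp
    (xif_continuous hΦ hsmall hinv1 hinv2))).inv₀
    fun η => ne_of_gt (one_sub_pos hsmall _)

lemma xif_periodic (hΦ : ContDiff ℝ (⊤ : ℕ∞) Φ) (hper : Function.Periodic Φ (2 * Real.pi))
    (hsmall : ∀ ξ : ℝ, |deriv Φ ξ| ≤ 1/2)
    (hinv1 : ∀ η, ξfn η - Φ (ξfn η) = η) (η : ℝ) :
    ξfn (η + 2 * Real.pi) = ξfn η + 2 * Real.pi := by
  have hg := gmap_strictMono hΦ hsmall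
  apply hg.injective
  show ξfn (η + 2 * Real.pi) - Φ (ξfn (η + 2 * Real.pi)) = _ - Φ _
  rw [hinv1]
  have hΦp : Φ (ξfn η + 2 * Real.pi) = Φ (ξfn η) := hper (ξfn η)
  rw [hΦp]
  rw [show ξfn η + 2 * Real.pi - Φ (ξfn η) = (ξfn η - Φ (ξfn η)) + 2 * Real.pi by ring, hinv1]

lemma xif_deriv_periodic (hΦ : ContDiff ℝ (⊤ : ℕ∞) Φ) (hper : Function.Periodic Φ (2 * Real.pi))
    (hsmall : ∀ ξ : ℝ, |deriv Φ ξ| ≤ 1/2)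
    (hinv1 : ∀ η, ξfn η - Φ (ξfn η) = η) (hinv2 : ∀ ξ, ξfn (ξ - Φ ξ) = ξ) :
    Function.Periodic (deriv ξfn) (2 * Real.pi) := by
  intro η
  rw [xif_deriv hΦ hsmall hinv1 hinv2, xif_deriv hΦ hsmall hinv1 hinv2,
    xif_periodic hΦ hper hsmall hinv1]
  congr 2
  have hfun : (fun y => Φ (y + 2 * Real.pi)) = Φ := funext hper
  calc deriv Φ (ξfn η + 2 * Real.pi)
      = deriv (fun y => Φ (y + 2 * Real.pi)) (ξfn η) := (deriv_comp_add_const Φ _ _).symm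
    _ = deriv Φ (ξfn η) := by rw [hfun]


lemma subst_integral (hΦ : ContDiff ℝ (⊤ : ℕ∞) Φ) (hper : Function.Periodic Φ (2 * Real.pi))
    (hsmall : ∀ ξ : ℝ, |deriv Φ ξ| ≤ 1/2)
    (h : ℝ → ℂ) (hh : Continuous h) (hhper : Function.Periodic h (2 * Real.pi)) :
    (∫ η in (0:ℝ)..(2 * Real.pi), h η)
      = ∫ ξ in (0:ℝ)..(2 * Real.pi), ((1 - deriv Φ ξ : ℝ) : ℂ) * h (ξ - Φ ξ) := by
  have key : (∫ ξ in (0:ℝ)..(2 * Real.pi), ((1 - deriv Φ ξ : ℝ) : ℂ) * h (ξ - Φ ξ))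
      = ∫ η in (0 - Φ 0)..(2 * Real.pi - Φ (2 * Real.pi)), h η := by
    have := intervalIntegral.integral_comp_smul_deriv
      (a := (0:ℝ)) (b := 2*Real.pi) (f := fun ξ => ξ - Φ ξ) (f' := fun ξ => 1 - deriv Φ ξ) (g := h)
      (fun x _ => gmap_hasDeriv hΦ x)
      ((continuous_const.sub (hΦ.continuous_deriv (by simp))).continuousOn) hh
    rw [← this]
    refine intervalIntegral.integral_congr fun ξ _ => ?_
    rw [Complex.real_smul]
    rfl
  rw [key]
  have h2 : (2 * Real.pi - Φ (2 * Real.pi)) = (0 - Φ 0) + 2 * Real.pi := by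
    have : Φ (0 + 2 * Real.pi) = Φ 0 := hper 0
    rw [zero_add] at this
    rw [this]
    ring
  rw [h2, hhper.intervalIntegral_add_eq (0 - Φ 0) 0, zero_add]

end Subst


lemma expIr_continuous {F : ℝ → ℝ} (hF : Continuous F) :
    Continuous fun ξ : ℝ => Complex.exp (Complex.I * (F ξ : ℝ)) :=
  Complex.continuous_exp.comp (continuous_const.mul (Complex.continuous_ofReal.comp hF))

lemma expIr_periodic {F : ℝ → ℝ} (hF : Function.Periodic F (2 * Real.pi)) :
    Function.Periodic (fun ξ : ℝ => Complex.exp (Complex.I * (F ξ : ℝ))) (2 * Real.pi) := by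
  intro x
  simp only [hF x]

lemma eint_continuous (q : ℤ) :
    Continuous fun ξ : ℝ => Complex.exp (Complex.I * (q : ℂ) * (ξ : ℂ)) :=
  Complex.continuous_exp.comp ((continuous_const.mul Complex.continuous_ofReal))

lemma eint_periodic (q : ℤ) :
    Function.Periodic (fun ξ : ℝ => Complex.exp (Complex.I * (q : ℂ) * (ξ : ℂ)))
      (2 * Real.pi) := by
  intro x
  have h : (Complex.I * q * ((x + 2 * Real.pi : ℝ) : ℂ))
      = Complex.I * q * (x : ℂ) + (q : ℂ) * (2 * (Real.pi : ℂ) * Complex.I) := by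
    push_cast
    ring
  simp only [h, Complex.exp_add, Complex.exp_int_mul_two_pi_mul_I, mul_one]

lemma conj_exp_I_real (r : ℝ) :
    (starRingEnd ℂ) (Complex.exp (Complex.I * (r : ℂ)))
      = Complex.exp (-(Complex.I * (r : ℂ))) := by
  rw [← Complex.exp_conj]
  congr 1
  simp [Complex.conj_ofReal]

lemma conj_exp_I_int (q : ℤ) (r : ℝ) :
    (starRingEnd ℂ) (Complex.exp (Complex.I * (q : ℂ) * (r : ℂ)))
      = Complex.exp (-(Complex.I * (q : ℂ) * (r : ℂ))) := by
  rw [← Complex.exp_conj]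
  congr 1
  simp [Complex.conj_ofReal]
-- extra helper lemmas to append before main theorem

lemma eint_add (q : ℤ) (x : ℝ) :
    Complex.exp (Complex.I * (q : ℂ) * ((x + 2 * Real.pi : ℝ) : ℂ))
      = Complex.exp (Complex.I * (q : ℂ) * (x : ℂ)) :=
  eint_periodic q x

lemma exp2 (c : ℂ) (B C D : ℂ) (h : B = C + D) :
    c * Complex.exp B = Complex.exp C * (c * Complex.exp D) := by
  rw [h, Complex.exp_add]; ring

lemma exp3 (c : ℂ) (A B C D : ℂ) (h : B = C + D) :
    c * Complex.exp A * Complex.exp B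
      = Complex.exp C * (c * Complex.exp A * Complex.exp D) := by
  rw [h, Complex.exp_add]; ring

lemma key1 (c0 ck A B C D : ℂ) :
    c0 * Complex.exp A * Complex.exp B * (ck * Complex.exp C * Complex.exp D)
      = c0 * ck * Complex.exp (A + B + C + D) := by
  rw [Complex.exp_add, Complex.exp_add, Complex.exp_add]; ring

lemma key2 (ck c0 t A B D : ℂ) (ht : t ≠ 0) :
    ck * (t * (c0 * Complex.exp A * Complex.exp B * (t⁻¹ * Complex.exp D)))
      = c0 * ck * Complex.exp (A + B + D) := by
  rw [Complex.exp_add, Complex.exp_add]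
  field_simp

set_option maxHeartbeats 2000000 in
/-- **Lemma 7.4 (composition formula).**
Let `ψ̃_n⁰, ψ̃_n ∈ 𝒬⁰` (smooth and `2π`-periodic in the second variable,
vanishing for large `|j|`) with `ψ̃_n(j,e^{iξ}) = ψ_n(e^{iξ}) + (j-n)φ_n(e^{iξ})`
for `|j-n| ≤ n/3` and `sup_{n ≥ n₀} ‖φ_n‖_{C¹(𝕋)} ≤ 1/2`; let `θ_n⁰, θ_n` be
smooth, vanishing outside `[2n/3, 4n/3]`. With `ξ_n` the inverse of
`η_n(ξ) = ξ - φ_n(e^{iξ})`, `ϑ̃_n(j,e^{iη}) = (j, e^{iξ_n(η)})` and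
`𝔭_n(e^{iη}) = ∂_η ξ_n(η)`, one has for `n ≥ n₀`:
`Q_n⁰ Q_n^* = (θ_n⁰ e^{i(ψ̃_n⁰-ψ̃_n)∘ϑ̃_n})(Λ,S) ∘ 𝔭_n(S) ∘ θ_n(Λ)`,
where `Q_n⁰ = (θ_n⁰ e^{iψ̃_n⁰})(Λ,S)` and `Q_n = (θ_n e^{iψ̃_n})(Λ,S)` are
the operators on `ℓ²(ℤ)` with the indicated matrix elements. -/
theorem composition_formula
    (n₀ : ℕ)
    (ψt0 ψt : ℕ → ℤ → ℝ → ℝ)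
    (hψt0 : ∀ (n : ℕ) (j : ℤ), ContDiff ℝ (⊤ : ℕ∞) (ψt0 n j) ∧
      Function.Periodic (ψt0 n j) (2 * Real.pi))
    (hψt : ∀ (n : ℕ) (j : ℤ), ContDiff ℝ (⊤ : ℕ∞) (ψt n j) ∧
      Function.Periodic (ψt n j) (2 * Real.pi))
    (hfin0 : ∀ n : ℕ, ∃ M : ℕ, ∀ j : ℤ, (M : ℤ) ≤ |j| → ∀ ξ : ℝ, ψt0 n j ξ = 0)
    (hfin : ∀ n : ℕ, ∃ M : ℕ, ∀ j : ℤ, (M : ℤ) ≤ |j| → ∀ ξ : ℝ, ψt n j ξ = 0)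
    (ψ φ : ℕ → ℝ → ℝ)
    (hψ : ∀ n : ℕ, ContDiff ℝ (⊤ : ℕ∞) (ψ n) ∧ Function.Periodic (ψ n) (2 * Real.pi))
    (hφ : ∀ n : ℕ, ContDiff ℝ (⊤ : ℕ∞) (φ n) ∧ Function.Periodic (φ n) (2 * Real.pi))
    (hdec : ∀ (n : ℕ) (j : ℤ) (ξ : ℝ), |(j : ℝ) - n| ≤ n / 3 →
      ψt n j ξ = ψ n ξ + ((j : ℝ) - n) * φ n ξ)
    (hφsmall : ∀ n : ℕ, n₀ ≤ n → ∀ ξ : ℝ,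
      |φ n ξ| ≤ 1 / 2 ∧ |deriv (φ n) ξ| ≤ 1 / 2)
    (ξf : ℕ → ℝ → ℝ)
    (hξf : ∀ n : ℕ, n₀ ≤ n →
      (∀ η : ℝ, ξf n η - φ n (ξf n η) = η) ∧ ∀ ξ : ℝ, ξf n (ξ - φ n ξ) = ξ)
    (θ0 θf : ℕ → ℝ → ℝ)
    (hθ0 : ∀ n : ℕ, ContDiff ℝ (⊤ : ℕ∞) (θ0 n) ∧
      ∀ s : ℝ, (s < 2 * n / 3 ∨ 4 * n / 3 < s) → θ0 n s = 0)
    (hθf : ∀ n : ℕ, ContDiff ℝ (⊤ : ℕ∞) (θf n) ∧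
      ∀ s : ℝ, (s < 2 * n / 3 ∨ 4 * n / 3 < s) → θf n s = 0)
    (Q0 Q R P Th : ℕ → l2Z →L[ℂ] l2Z)
    (hQ0 : ∀ (n : ℕ) (j k : ℤ), (inner ℂ (eZ j) (Q0 n (eZ k)) : ℂ) =
      (∫ ξ in (0 : ℝ)..(2 * Real.pi),
          ((θ0 n (j : ℝ) : ℝ) : ℂ) * Complex.exp (Complex.I * (ψt0 n j ξ)) *
            Complex.exp (Complex.I * ((k : ℝ) - (j : ℝ)) * ξ)) / (2 * Real.pi))
    (hQ : ∀ (n : ℕ) (j k : ℤ), (inner ℂ (eZ j) (Q n (eZ k)) : ℂ) =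
      (∫ ξ in (0 : ℝ)..(2 * Real.pi),
          ((θf n (j : ℝ) : ℝ) : ℂ) * Complex.exp (Complex.I * (ψt n j ξ)) *
            Complex.exp (Complex.I * ((k : ℝ) - (j : ℝ)) * ξ)) / (2 * Real.pi))
    (hR : ∀ (n : ℕ) (j k : ℤ), (inner ℂ (eZ j) (R n (eZ k)) : ℂ) =
      (∫ η in (0 : ℝ)..(2 * Real.pi),
          ((θ0 n (j : ℝ) : ℝ) : ℂ) *
            Complex.exp (Complex.I * (ψt0 n j (ξf n η) - ψt n j (ξf n η))) *
            Complex.exp (Complex.I * ((k : ℝ) - (j : ℝ)) * η)) / (2 * Real.pi))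
    (hP : ∀ (n : ℕ) (j k : ℤ), (inner ℂ (eZ j) (P n (eZ k)) : ℂ) =
      (∫ η in (0 : ℝ)..(2 * Real.pi),
          ((deriv (ξf n) η : ℝ) : ℂ) *
            Complex.exp (Complex.I * ((k : ℝ) - (j : ℝ)) * η)) / (2 * Real.pi))
    (hTh : ∀ (n : ℕ) (x : l2Z) (k : ℤ), (Th n x) k = ((θf n (k : ℝ) : ℝ) : ℂ) * x k) :
    ∀ n : ℕ, n₀ ≤ n →
      Q0 n ∘L ContinuousLinearMap.adjoint (Q n) = R n ∘L P n ∘L Th n := by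
  intro n hn
  -- basic data for this n
  have hΦc : ContDiff ℝ (⊤ : ℕ∞) (φ n) := (hφ n).1
  have hΦp : Function.Periodic (φ n) (2 * Real.pi) := (hφ n).2
  have hds : ∀ ξ : ℝ, |deriv (φ n) ξ| ≤ 1 / 2 := fun ξ => (hφsmall n hn ξ).2
  have hinv1 : ∀ η : ℝ, ξf n η - φ n (ξf n η) = η := (hξf n hn).1
  have hinv2 : ∀ ξ : ℝ, ξf n (ξ - φ n ξ) = ξ := (hξf n hn).2
  have hΞc : Continuous (ξf n) := xif_continuous hΦc hds hinv1 hinv2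
  apply ext_of_matrix
  intro j k
  rw [ContinuousLinearMap.comp_apply, ContinuousLinearMap.comp_apply,
    ContinuousLinearMap.comp_apply]
  -- function definitions
  set u : ℝ → ℂ := fun ξ => ((θ0 n (j : ℝ) : ℝ) : ℂ)
      * Complex.exp (Complex.I * ((ψt0 n j ξ : ℝ) : ℂ))
      * Complex.exp (Complex.I * ((-j : ℤ) : ℂ) * (ξ : ℂ)) with hu
  set v : ℝ → ℂ := fun ξ => ((θf n (k : ℝ) : ℝ) : ℂ)
      * Complex.exp (Complex.I * ((ψt n k ξ : ℝ) : ℂ))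
      * Complex.exp (Complex.I * ((-k : ℤ) : ℂ) * (ξ : ℂ)) with hv
  set w : ℝ → ℂ := fun η => ((θ0 n (j : ℝ) : ℝ) : ℂ)
      * Complex.exp (Complex.I * ((ψt0 n j (ξf n η) - ψt n j (ξf n η) : ℝ) : ℂ))
      * Complex.exp (Complex.I * ((-j : ℤ) : ℂ) * (η : ℂ)) with hw
  set z : ℝ → ℂ := fun η => ((deriv (ξf n) η : ℝ) : ℂ)
      * Complex.exp (Complex.I * ((k : ℤ) : ℂ) * (η : ℂ)) with hz
  -- continuity and periodicity
  have huc : Continuous u := (continuous_const.mul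
    (expIr_continuous (hψt0 n j).1.continuous)).mul (eint_continuous (-j))
  have hvc : Continuous v := (continuous_const.mul
    (expIr_continuous (hψt n k).1.continuous)).mul (eint_continuous (-k))
  have hwc : Continuous w := (continuous_const.mul
    (expIr_continuous (((hψt0 n j).1.continuous.comp hΞc).sub
      ((hψt n j).1.continuous.comp hΞc)))).mul (eint_continuous (-j))
  have hzc : Continuous z := (Complex.continuous_ofReal.comp
    (xif_deriv_continuous hΦc hds hinv1 hinv2)).mul (eint_continuous k)
  have hup : Function.Periodic u (2 * Real.pi) := by
    intro x
    simp only [hu]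
    rw [(hψt0 n j).2 x, eint_add (-j) x]
  have hvp : Function.Periodic v (2 * Real.pi) := by
    intro x
    simp only [hv]
    rw [(hψt n k).2 x, eint_add (-k) x]
  have hwp : Function.Periodic w (2 * Real.pi) := by
    intro x
    simp only [hw]
    rw [xif_periodic hΦc hΦp hds hinv1 x, (hψt0 n j).2 (ξf n x), (hψt n j).2 (ξf n x),
      eint_add (-j) x]
  have hzp : Function.Periodic z (2 * Real.pi) := by
    intro x
    simp only [hz]
    rw [xif_deriv_periodic hΦc hΦp hds hinv1 hinv2 x, eint_add k x]
  -- matrix elements as Fourier coefficients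
  have hQ0m : ∀ m : ℤ, (inner ℂ (eZ j) (Q0 n (eZ m)) : ℂ) = cF u (-m) := by
    intro m
    rw [hQ0 n j m, cF_eq]
    congr 1
    refine intervalIntegral.integral_congr fun ξ _ => ?_
    simp only [hu]
    exact exp3 _ _ _ _ _ (by push_cast; ring)
  have hQm : ∀ m : ℤ, (inner ℂ (eZ k) (Q n (eZ m)) : ℂ) = cF v (-m) := by
    intro m
    rw [hQ n k m, cF_eq]
    congr 1
    refine intervalIntegral.integral_congr fun ξ _ => ?_
    simp only [hv]
    exact exp3 _ _ _ _ _ (by push_cast; ring)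
  have hRm : ∀ m : ℤ, (inner ℂ (eZ j) (R n (eZ m)) : ℂ) = cF w (-m) := by
    intro m
    rw [hR n j m, cF_eq]
    congr 1
    refine intervalIntegral.integral_congr fun η _ => ?_
    simp only [hw, Complex.ofReal_sub]
    exact exp3 _ _ _ _ _ (by push_cast; ring)
  have hPm : ∀ m : ℤ, (inner ℂ (eZ m) (P n (eZ k)) : ℂ) = cF z m := by
    intro m
    rw [hP n m k, cF_eq]
    congr 1
    refine intervalIntegral.integral_congr fun η _ => ?_
    simp only [hz]
    exact exp2 _ _ _ _ (by push_cast; ring)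
  -- LHS
  have hLHS : (inner ℂ (eZ j) (Q0 n (ContinuousLinearMap.adjoint (Q n) (eZ k))) : ℂ)
      = (∫ ξ in (0:ℝ)..(2 * Real.pi), u ξ * (starRingEnd ℂ) (v ξ)) / (2 * Real.pi) := by
    rw [← ContinuousLinearMap.adjoint_inner_left (Q0 n), lp.inner_eq_tsum]
    have hterm : ∀ m : ℤ,
        (inner ℂ ((ContinuousLinearMap.adjoint (Q0 n) (eZ j)) m)
          ((ContinuousLinearMap.adjoint (Q n) (eZ k)) m) : ℂ)
        = cF u (-m) * (starRingEnd ℂ) (cF v (-m)) := by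
      intro m
      rw [RCLike.inner_apply, adj_coord, adj_coord, Complex.conj_conj, hQ0m m, hQm m, mul_comm]
    rw [tsum_congr hterm]
    have hre := Equiv.tsum_eq (Equiv.neg ℤ) (fun m => cF u m * (starRingEnd ℂ) (cF v m))
    simp only [Equiv.neg_apply] at hre
    rw [hre, parseval2 u v huc hvc hup hvp]
  -- Th action
  have hThk : Th n (eZ k) = ((θf n (k : ℝ) : ℝ) : ℂ) • eZ k := by
    apply lp.ext
    funext m
    show (Th n (eZ k)) m = (((θf n (k : ℝ) : ℝ) : ℂ) • eZ k) m
    rw [hTh n (eZ k) m, lp.coeFn_smul, Pi.smul_apply, smul_eq_mul]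
    by_cases hm : m = k
    · subst hm
      rfl
    · have h1 : (eZ k) m = 0 := lp.single_apply_ne 2 k _ hm
      rw [h1, mul_zero, mul_zero]
  -- RHS
  have hRHS : (inner ℂ (eZ j) (R n (P n (Th n (eZ k)))) : ℂ)
      = ((θf n (k : ℝ) : ℝ) : ℂ)
        * ((∫ η in (0:ℝ)..(2 * Real.pi), w η * z η) / (2 * Real.pi)) := by
    rw [hThk, ContinuousLinearMap.map_smul, ContinuousLinearMap.map_smul, inner_smul_right]
    congr 1
    rw [← ContinuousLinearMap.adjoint_inner_left (R n), lp.inner_eq_tsum]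
    have hterm : ∀ m : ℤ,
        (inner ℂ ((ContinuousLinearMap.adjoint (R n) (eZ j)) m) ((P n (eZ k)) m) : ℂ)
        = cF w (-m) * cF z m := by
      intro m
      rw [RCLike.inner_apply, adj_coord, Complex.conj_conj, hRm m,
        coord_eq_inner (P n (eZ k)) m, hPm m, mul_comm]
    rw [tsum_congr hterm]
    have hconj : ∀ m : ℤ, cF w (-m) * cF z m
        = (starRingEnd ℂ) (cF (fun x => (starRingEnd ℂ) (w x)) m) * cF z m := by
      intro m
      rw [cF_conj, Complex.conj_conj]
    have hwcp : Function.Periodic (fun x => (starRingEnd ℂ) (w x)) (2 * Real.pi) :=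
      fun x => by simp only [hwp x]
    rw [tsum_congr hconj,
      parseval_core (fun x => (starRingEnd ℂ) (w x)) z
        (Complex.continuous_conj.comp hwc) hzc hwcp hzp]
    congr 1
    refine intervalIntegral.integral_congr fun η _ => ?_
    rw [Complex.conj_conj]
  rw [hLHS, hRHS]
  by_cases h0 : θ0 n (j : ℝ) = 0
  · have hu0 : ∀ ξ : ℝ, u ξ * (starRingEnd ℂ) (v ξ) = 0 := by
      intro ξ; simp [hu, h0]
    have hw0 : ∀ η : ℝ, w η * z η = 0 := by
      intro η; simp [hw, h0]
    rw [intervalIntegral.integral_congr (g := fun _ => (0:ℂ)) (fun ξ _ => hu0 ξ),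
      intervalIntegral.integral_congr (g := fun _ => (0:ℂ)) (fun η _ => hw0 η)]
    simp
  by_cases hk0 : θf n (k : ℝ) = 0
  · have hv0 : ∀ ξ : ℝ, u ξ * (starRingEnd ℂ) (v ξ) = 0 := by
      intro ξ; simp [hv, hk0]
    rw [intervalIntegral.integral_congr (g := fun _ => (0:ℂ)) (fun ξ _ => hv0 ξ)]
    simp [hk0]
  -- main case: both cut-offs nonzero
  have hjmem : ¬(((j:ℤ):ℝ) < 2 * n / 3 ∨ 4 * n / 3 < ((j:ℤ):ℝ)) :=
    fun hc => h0 ((hθ0 n).2 _ hc)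
  push_neg at hjmem
  have hjb : |((j:ℤ):ℝ) - n| ≤ n / 3 :=
    abs_le.2 ⟨by linarith [hjmem.1], by linarith [hjmem.2]⟩
  have hkmem : ¬(((k:ℤ):ℝ) < 2 * n / 3 ∨ 4 * n / 3 < ((k:ℤ):ℝ)) :=
    fun hc => hk0 ((hθf n).2 _ hc)
  push_neg at hkmem
  have hkb : |((k:ℤ):ℝ) - n| ≤ n / 3 :=
    abs_le.2 ⟨by linarith [hkmem.1], by linarith [hkmem.2]⟩
  have hsub := subst_integral hΦc hΦp hds (fun η => w η * z η) (hwc.mul hzc) (hwp.mul hzp)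
  beta_reduce at hsub
  rw [hsub, ← mul_div_assoc, ← intervalIntegral.integral_const_mul]
  congr 1
  refine intervalIntegral.integral_congr fun ξ _ => ?_
  have hne : (1 - deriv (φ n) ξ : ℝ) ≠ 0 := ne_of_gt (one_sub_pos hds ξ)
  have hneC : ((1 - deriv (φ n) ξ : ℝ) : ℂ) ≠ 0 := Complex.ofReal_ne_zero.2 hne
  have hder : deriv (ξf n) (ξ - φ n ξ) = (1 - deriv (φ n) ξ)⁻¹ := by
    rw [xif_deriv hΦc hds hinv1 hinv2, hinv2]
  simp only [hu, hv, hw, hz, hinv2, hder]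
  rw [map_mul, map_mul, Complex.conj_ofReal, conj_exp_I_real, conj_exp_I_int]
  rw [hdec n j ξ hjb, hdec n k ξ hkb]
  rw [Complex.ofReal_inv]
  rw [key1, key2 _ _ _ _ _ _ hneC]
  congr 2
  push_cast
  ring
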